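/- arXiv:0804.1012 — 2 statements merged into one kernel-verified Lean document; each statement's English description precedes it below -/
import Mathlib

section
/- In the ring ℚ[x, y]/(x² + y² - 1) of trigonometric polynomials (corresponding to σ = -1, where the polynomial λ² + 1 is irreducible over ℚ), the ideal (S₁, C₁ + 1), i.e. the ideal generated by the images of y and x + 1, is not principal. -/
/-!
Put A = ℚ[x] and d = 1 - x², so that the trigonometric ring maps to A[√d] = A[y]/(y² - d)
with x ↦ x, y ↦ √d. Conjugation √d ↦ -√d gives the multiplicative norm
N(a + b√d) = a² - (1 - x²) b² with values in A. If (√d, x + 1) = (f), then N f divides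
N √d = x² - 1 and N (x + 1) = (x + 1)², and N f vanishes at x = -1 because f vanishes at
the point (-1, 0); hence N f = c (x + 1) with c ≠ 0. But every norm is nonnegative wherever
x² ≥ 1, in particular at x = 1 and x = -3, where c (x + 1) takes the values 2c and -2c.
-/

open Polynomial

namespace AdjoinRoot

variable {A : Type*} [CommRing A] (d : A)

theorem root_sq_of_X_sq_sub_C : root (X ^ 2 - C d) ^ 2 = of (X ^ 2 - C d) d := by
  have h := mk_self (f := X ^ 2 - C d)
  rwa [map_sub, map_pow, mk_X, mk_C, sub_eq_zero] at h

theorem exists_eq_of_add_of_mul_root [Nontrivial A] (z : AdjoinRoot (X ^ 2 - C d)) :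
    ∃ a b : A, z = of _ a + of _ b * root _ := by
  have hmonic : (X ^ 2 - C d).Monic := monic_X_pow_sub_C d two_ne_zero
  induction z using AdjoinRoot.induction_on with | ih P
  set r := P %ₘ (X ^ 2 - C d) with hr
  have hdeg : r.degree < 2 := by simpa [degree_X_pow_sub_C] using degree_modByMonic_lt P hmonic
  refine ⟨r.coeff 0, r.coeff 1, ?_⟩
  conv_lhs => rw [← mk_leftInverse hmonic (mk _ P), modByMonicHom_mk, ← hr,
    eq_X_add_C_of_degree_le_one (Order.le_of_lt_succ hdeg)]
  rw [map_add, map_mul, mk_C, mk_C, mk_X, add_comm]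

theorem of_injective_of_X_sq_sub_C [IsDomain A] : Function.Injective (of (X ^ 2 - C d)) :=
  of.injective_of_degree_ne_zero (by rw [degree_X_pow_sub_C two_pos]; decide)

noncomputable def sqrtConj : AdjoinRoot (X ^ 2 - C d) →+* AdjoinRoot (X ^ 2 - C d) :=
  lift (of _) (-root _) (by simp [root_sq_of_X_sq_sub_C])

@[simp] theorem sqrtConj_of (a : A) : sqrtConj d (of _ a) = of _ a := lift_of _
@[simp] theorem sqrtConj_root : sqrtConj d (root _) = -root _ := lift_root _

theorem exists_mul_sqrtConj_eq [Nontrivial A] (z : AdjoinRoot (X ^ 2 - C d)) :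
    ∃ a b : A, z * sqrtConj d z = of _ (a ^ 2 - d * b ^ 2) := by
  obtain ⟨a, b, rfl⟩ := exists_eq_of_add_of_mul_root d z
  refine ⟨a, b, ?_⟩
  simp only [map_add, map_mul, sqrtConj_of, sqrtConj_root, map_sub, map_pow]
  linear_combination (-(of _ b) ^ 2) * root_sq_of_X_sq_sub_C d

end AdjoinRoot

namespace Polynomial

variable {K : Type*}

theorem eval_sq_sub_one_sub_X_sq_mul_sq_nonneg [CommRing K] [LinearOrder K] [IsStrictOrderedRing K]
    (a b : K[X]) {x : K} (hx : 1 ≤ x ^ 2) : 0 ≤ (a ^ 2 - (1 - X ^ 2) * b ^ 2).eval x := by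
  simp only [eval_sub, eval_mul, eval_pow, eval_one, eval_X]
  nlinarith [sq_nonneg (a.eval x), sq_nonneg (b.eval x)]

theorem exists_eq_C_mul_X_add_one_of_dvd [Field K] (h2 : (2 : K) ≠ 0) {n : K[X]}
    (hn₁ : n ∣ X ^ 2 - 1) (hn₂ : n ∣ (X + 1) ^ 2) (hroot : n.IsRoot (-1)) :
    ∃ c : K, c ≠ 0 ∧ n = C c * (X + 1) := by
  obtain ⟨m, rfl⟩ : X + 1 ∣ n := by simpa using (dvd_iff_isRoot (p := n)).mpr hroot
  have hX : (X + 1 : K[X]) ≠ 0 := by simpa using X_add_C_ne_zero (1 : K)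
  have hm₁ : m ∣ X - 1 := (mul_dvd_mul_iff_left hX).mp <| by
    rwa [show (X ^ 2 - 1 : K[X]) = (X + 1) * (X - 1) by ring] at hn₁
  have hm₂ : m ∣ X + 1 := (mul_dvd_mul_iff_left hX).mp <| by rwa [sq] at hn₂
  have hm : m ∣ C 2 := by
    convert dvd_sub hm₂ hm₁ using 1
    rw [map_ofNat]
    ring
  obtain ⟨c, hc, rfl⟩ := isUnit_iff.mp (isUnit_of_dvd_unit hm (isUnit_C.mpr h2.isUnit))
  exact ⟨c, hc.ne_zero, mul_comm _ _⟩

end Polynomial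

namespace UnitCircle

open AdjoinRoot

variable {K : Type*} [Field K]

theorem isRoot_neg_one_of_mul_sqrtConj_eq {f : AdjoinRoot (X ^ 2 - C (1 - X ^ 2 : K[X]))}
    (hf : f ∈ Ideal.span {root _, of _ (X + 1)}) {n : K[X]}
    (hn : f * sqrtConj _ f = of _ n) : n.IsRoot (-1) := by
  let ε : AdjoinRoot (X ^ 2 - C (1 - X ^ 2 : K[X])) →+* K :=
    lift (evalRingHom (-1)) 0 (by rw [eval₂_sub, eval₂_X_pow, eval₂_C]; simp)
  have hε : ε f = 0 := by
    have : Ideal.span {root _, of _ (X + 1)} ≤ RingHom.ker ε :=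
      Ideal.span_le.mpr (by simp [Set.insert_subset_iff, ε])
    exact this hf
  simpa [hε, ε] using (congrArg ε hn).symm

theorem not_isPrincipal_span_root_of_X_add_one [LinearOrder K] [IsStrictOrderedRing K] :
    ¬ (Ideal.span {root (X ^ 2 - C (1 - X ^ 2 : K[X])), of _ (X + 1)}).IsPrincipal := by
  rintro ⟨f, hf⟩
  rw [Ideal.submodule_span_eq] at hf
  obtain ⟨g, hg⟩ : f ∣ root _ :=
    Ideal.mem_span_singleton.mp (hf ▸ Ideal.subset_span (by simp))
  obtain ⟨h, hh⟩ : f ∣ of _ (X + 1) :=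
    Ideal.mem_span_singleton.mp (hf ▸ Ideal.subset_span (by simp))
  obtain ⟨a, b, hnf⟩ := exists_mul_sqrtConj_eq _ f
  obtain ⟨c, e, hng⟩ := exists_mul_sqrtConj_eq _ g
  obtain ⟨u, v, hnh⟩ := exists_mul_sqrtConj_eq _ h
  have h₁ : a ^ 2 - (1 - X ^ 2) * b ^ 2 ∣ X ^ 2 - 1 := by
    refine ⟨c ^ 2 - (1 - X ^ 2) * e ^ 2, of_injective_of_X_sq_sub_C (1 - X ^ 2) ?_⟩
    rw [map_mul, ← hnf, ← hng, mul_mul_mul_comm, ← map_mul, ← hg, sqrtConj_root, mul_neg,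
      ← sq, root_sq_of_X_sq_sub_C, ← map_neg, neg_sub]
  have h₂ : a ^ 2 - (1 - X ^ 2) * b ^ 2 ∣ (X + 1) ^ 2 := by
    refine ⟨u ^ 2 - (1 - X ^ 2) * v ^ 2, of_injective_of_X_sq_sub_C (1 - X ^ 2) ?_⟩
    rw [map_mul, ← hnf, ← hnh, mul_mul_mul_comm, ← map_mul, ← hh, sqrtConj_of, ← map_mul,
      ← sq]
  have hroot := isRoot_neg_one_of_mul_sqrtConj_eq (hf ▸ Ideal.mem_span_singleton_self f) hnf
  obtain ⟨k, hk, hk_eq⟩ := exists_eq_C_mul_X_add_one_of_dvd two_ne_zero h₁ h₂ hroot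
  have h_one := eval_sq_sub_one_sub_X_sq_mul_sq_nonneg a b (x := 1) (by norm_num)
  have h_neg_three := eval_sq_sub_one_sub_X_sq_mul_sq_nonneg a b (x := -3) (by norm_num)
  rw [hk_eq] at h_one h_neg_three
  simp only [eval_mul, eval_C, eval_add, eval_X, eval_one] at h_one h_neg_three
  exact hk (by linarith)

variable (K) in
noncomputable def toAdjoinRoot :
    MvPolynomial (Fin 2) K ⧸ Ideal.span {(MvPolynomial.X 0 ^ 2 + MvPolynomial.X 1 ^ 2 - 1 :
      MvPolynomial (Fin 2) K)} →+*
      AdjoinRoot (X ^ 2 - C (1 - X ^ 2 : K[X])) :=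
  Ideal.Quotient.lift _ (MvPolynomial.eval₂Hom ((of _).comp C) ![of _ X, root _]) fun p hp => by
    obtain ⟨q, rfl⟩ := Ideal.mem_span_singleton'.mp hp
    simp only [map_mul, map_sub, map_add, map_pow, map_one, MvPolynomial.eval₂Hom_X',
      Matrix.cons_val_zero, Matrix.cons_val_one, root_sq_of_X_sq_sub_C]
    ring

theorem map_toAdjoinRoot_span :
    (Ideal.span {Ideal.Quotient.mk _ (MvPolynomial.X 1),
      Ideal.Quotient.mk _ (MvPolynomial.X 0 + 1)}).map (toAdjoinRoot K) =
      Ideal.span {root _, of _ (X + 1)} := by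
  simp [Ideal.map_span, Set.image_pair, toAdjoinRoot]

end UnitCircle

open MvPolynomial

theorem stmt_7 :
    ¬ (Ideal.span
        { Ideal.Quotient.mk
            (Ideal.span {(X 0 : MvPolynomial (Fin 2) ℚ) ^ 2 + X 1 ^ 2 - 1}) (X 1),
          Ideal.Quotient.mk
            (Ideal.span {(X 0 : MvPolynomial (Fin 2) ℚ) ^ 2 + X 1 ^ 2 - 1}) (X 0 + 1)
        }).IsPrincipal := by
  intro h
  have := h.map_ringHom (UnitCircle.toAdjoinRoot ℚ)
  rw [UnitCircle.map_toAdjoinRoot_span] at this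
  exact UnitCircle.not_isPrincipal_span_root_of_X_add_one this
end

section
/- Let R be a Bézout domain and Σ a finitely presented R-module. Then Σ decomposes as a direct sum Σ = t(Σ) ⊕ Σ/t(Σ), where t(Σ) is the torsion submodule (which is finitely presented torsion) and Σ/t(Σ) is free of finite rank. In particular, a finitely presented module over a Bézout domain is free if and only if it is torsion free. -/
/-!
A finitely generated torsion-free module over a domain embeds into some `Rⁿ`: if `a • M` lies in
the span of a maximal linearly independent family of generators, then `x ↦ a • x` is such an
embedding. Over a Bézout domain a finitely generated submodule of `Rⁿ⁺¹` is free, because its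
image under the first coordinate is a finitely generated, hence principal, hence free ideal, so
it splits off with a kernel that embeds into `Rⁿ`. Applied to `M ⧸ t(M)`, this makes the quotient
free, hence projective, so `0 → t(M) → M → M ⧸ t(M) → 0` splits and `t(M)` is finitely presented.
-/

open Function Submodule LinearMap

theorem Function.Exact.nonempty_linearEquiv_prod_of_projective {R M N P : Type*} [Ring R]
    [AddCommGroup M] [AddCommGroup N] [AddCommGroup P] [Module R M] [Module R N] [Module R P]
    [Module.Projective R P] {f : M →ₗ[R] N} {g : N →ₗ[R] P} (h : Exact f g) (hf : Injective f)
    (hg : Surjective g) : Nonempty (N ≃ₗ[R] M × P) :=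
  have ⟨l, hl⟩ := Module.projective_lifting_property g .id hg
  ⟨(h.splitSurjectiveEquiv hf ⟨l, hl⟩).1⟩

section Domain

variable {R : Type*} [CommRing R] [IsDomain R]

theorem Ideal.free_of_isPrincipal (I : Ideal R) [I.IsPrincipal] : Module.Free R I := by
  rcases eq_or_ne I ⊥ with rfl | hI
  · infer_instance
  · exact .of_equiv (Ideal.isoBaseOfIsPrincipal hI)

theorem Module.exists_injective_pi_of_isTorsionFree {M : Type*} [AddCommGroup M] [Module R M]
    [Module.Finite R M] [Module.IsTorsionFree R M] :
    ∃ (n : ℕ) (f : M →ₗ[R] Fin n → R), Function.Injective f := by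
  obtain ⟨k, s, hs⟩ := Module.Finite.exists_fin (R := R) (M := M)
  obtain ⟨I, hI, hmax⟩ := exists_maximal_linearIndepOn R s
  have hmul_mem : ∀ i, ∃ a : R, a ≠ 0 ∧ a • s i ∈ span R (s '' I) := fun i ↦ by
    by_cases hi : i ∈ I
    · exact ⟨1, one_ne_zero, by simpa using subset_span (Set.mem_image_of_mem s hi)⟩
    · exact hmax i hi
  choose a ha0 ha using hmul_mem
  set A := ∏ i, a i with hA_def
  have hA : A ≠ 0 := Finset.prod_ne_zero_iff.mpr fun i _ ↦ ha0 i
  have hAM : ∀ x : M, A • x ∈ span R (s '' I) := by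
    suffices range (lsmul R M A) ≤ span R (s '' I) from fun x ↦ this ⟨x, rfl⟩
    rw [range_eq_map, ← hs, Submodule.map_span_le]
    rintro _ ⟨i, rfl⟩
    rw [lsmul_apply, hA_def, Fintype.prod_eq_prod_compl_mul i, mul_smul]
    exact smul_mem _ _ (ha i)
  let b : Module.Basis I R (span R (s '' I)) :=
    (Module.Basis.span hI).map (LinearEquiv.ofEq _ _ (by rw [Set.image_eq_range]))
  have : Fintype I := Fintype.ofFinite I
  let e := (b.reindex (Fintype.equivFin I)).equivFun
  refine ⟨Fintype.card I, e.toLinearMap ∘ₗ (lsmul R M A).codRestrict _ hAM, ?_⟩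
  refine e.injective.comp fun x y hxy ↦ ?_
  exact lsmul_injective (M := M) hA (Subtype.ext_iff.mp hxy)

variable [IsBezout R]

theorem IsBezout.free_of_injective_pi {n : ℕ} {M : Type*} [AddCommGroup M] [Module R M]
    [Module.Finite R M] (f : M →ₗ[R] Fin n → R) (hf : Injective f) : Module.Free R M := by
  induction n generalizing M with
  | zero =>
    have : Subsingleton M := hf.subsingleton
    infer_instance
  | succ n ih =>
    let g : M →ₗ[R] R := proj 0 ∘ₗ f
    have : (range g).IsPrincipal :=
      isPrincipal_of_FG _ (range_eq_map g ▸ Module.Finite.fg_top.map g)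
    have := Ideal.free_of_isPrincipal (range g)
    obtain ⟨e⟩ := (exact_subtype_ker_map g.rangeRestrict).nonempty_linearEquiv_prod_of_projective
      (ker g.rangeRestrict).injective_subtype g.surjective_rangeRestrict
    have : Module.Finite R (ker g.rangeRestrict) :=
      .of_surjective (fst _ _ _ ∘ₗ e.toLinearMap) (Prod.fst_surjective.comp e.surjective)
    have : Module.Free R (ker g.rangeRestrict) := by
      refine ih (pi (fun i ↦ proj i.succ) ∘ₗ f ∘ₗ (ker _).subtype) ?_
      rintro ⟨x, hx⟩ ⟨y, hy⟩ hxy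
      rw [ker_rangeRestrict, mem_ker] at hx hy
      refine Subtype.ext (hf (funext fun i ↦ i.cases ?_ fun j ↦ congrFun hxy j))
      exact hx.trans hy.symm
    exact .of_equiv e.symm

theorem IsBezout.free_of_isTorsionFree {M : Type*} [AddCommGroup M] [Module R M]
    [Module.Finite R M] [Module.IsTorsionFree R M] : Module.Free R M :=
  have ⟨_, f, hf⟩ := Module.exists_injective_pi_of_isTorsionFree (R := R) (M := M)
  free_of_injective_pi f hf

end Domain

theorem stmt_11 (R : Type*) [CommRing R] [IsDomain R] [IsBezout R]
    (M : Type*) [AddCommGroup M] [Module R M] [Module.FinitePresentation R M] :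
    Nonempty (M ≃ₗ[R] (Submodule.torsion R M) × (M ⧸ Submodule.torsion R M)) ∧
      Module.FinitePresentation R (Submodule.torsion R M) ∧
      Module.Free R (M ⧸ Submodule.torsion R M) ∧
      Module.Finite R (M ⧸ Submodule.torsion R M) ∧
      (Module.Free R M ↔ Submodule.torsion R M = ⊥) := by
  have hfree : Module.Free R (M ⧸ torsion R M) := IsBezout.free_of_isTorsionFree
  have hexact := exact_subtype_mkQ (torsion R M)
  have hinj := (torsion R M).injective_subtype
  have hsurj := (torsion R M).mkQ_surjective
  refine ⟨hexact.nonempty_linearEquiv_prod_of_projective hinj hsurj,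
    Module.finitePresentation_of_projective_of_exact _ _ hinj hsurj hexact, hfree,
    inferInstance, ?_⟩
  rw [← isTorsionFree_iff_torsion_eq_bot]
  exact ⟨fun _ ↦ inferInstance, fun _ ↦ IsBezout.free_of_isTorsionFree⟩
end
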